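/- For each ε ∈ {ω, φ} and each c ∈ {1, −1}, the conjugacy class of ε^c in P satisfies Con(ε^c)_P = { y⁻¹ ε^c y : y ∈ W(D₄) }. -/

import Mathlib

/-
The conjugation action of `ω` on `W(D₄)`-conjugates is absorbed by `W(D₄)` as soon as
`ω w` commutes with `ε` for some `w ∈ W(D₄)`: since `ω` normalizes `W(D₄)`, every element
of `P` has the form `(ω w)ⁿ y` with `y ∈ W(D₄)`, and `(ω w)ⁿ` centralizes `ε^c`. For `ε = ω`
take `w = 1`; for `ε = φ`, `w = r_{e₁+e₃} r_{e₁+e₂}` works, which is checked on matrices.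
-/

/-- The multiplicative group structure that older Mathlib put on `AddAut A`
(composition as multiplication); current Mathlib makes `AddAut A` an additive group. -/
instance addAutMulGroup {A : Type*} [Add A] : Group (AddAut A) where
  mul g h := AddEquiv.trans h g
  one := AddEquiv.refl _
  inv := AddEquiv.symm
  mul_assoc _ _ _ := rfl
  one_mul _ := rfl
  mul_one _ := rfl
  inv_mul_cancel := AddEquiv.self_trans_symm

section Infra
variable {L : Type*} [AddCommGroup L]

/-- The subgroup of fixed points of an automorphism of an abelian group. -/
def fixedPts (f : AddAut L) : AddSubgroup L where
  carrier := {x | f x = x}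
  add_mem' := by
    intro a b ha hb
    simp only [Set.mem_setOf_eq, map_add] at *
    rw [ha, hb]
  zero_mem' := by simp
  neg_mem' := by
    intro a ha
    simp only [Set.mem_setOf_eq, map_neg] at *
    rw [ha]

/-- The isometry group of a `ℤ`-valued form: the group of all automorphisms of the
additive group preserving the form.  For a lattice `(L, B)` this is `Aut L`. -/
def IsometryGrp (B : L → L → ℤ) : Subgroup (AddAut L) where
  carrier := {f | ∀ x y, B (f x) (f y) = B x y}
  one_mem' := by intro x y; rfl
  mul_mem' := by
    intro a b ha hb x y
    have h : ∀ z, (a * b) z = a (b z) := fun z => rfl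
    simp only [Set.mem_setOf_eq] at *
    rw [h, h, ha, hb]
  inv_mem' := by
    intro a ha x y
    simp only [Set.mem_setOf_eq] at *
    have h := ha (a⁻¹ x) (a⁻¹ y)
    have h1 : a (a⁻¹ x) = x := a.apply_symm_apply x
    have h2 : a (a⁻¹ y) = y := a.apply_symm_apply y
    rw [h1, h2] at h
    exact h.symm

/-- The Weyl group of a lattice `(L, B)`: the subgroup generated by the reflections
`r_α : x ↦ x − B(x,α)•α` in the norm-2 vectors `α`. -/
def WeylGrp (B : L → L → ℤ) : Subgroup (AddAut L) :=
  Subgroup.closure {w | ∃ α : L, B α α = 2 ∧ ∀ x, w x = x - B x α • α}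

/-- The root lattice of `(L, B)`: the subgroup generated by the norm-2 vectors. -/
def rootLat (B : L → L → ℤ) : AddSubgroup L :=
  AddSubgroup.closure {α | B α α = 2}

/-- The rank of the fixed-point sublattice of an automorphism. -/
noncomputable def fixedRank (f : AddAut L) : ℕ :=
  Module.finrank ℤ ↥(fixedPts f)

end Infra

/-- An isomorphism of lattices: an isomorphism of the underlying abelian groups
(equivalently, a `ℤ`-linear isomorphism) preserving the forms. -/
def FormIso {M N : Type*} [AddCommGroup M] [AddCommGroup N]
    (BM : M → M → ℤ) (BN : N → N → ℤ) : Prop :=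
  ∃ e : M ≃+ N, ∀ x y, BN (e x) (e y) = BM x y

/-- The standard dot product on `ι → ℤ`. -/
def dotF {ι : Type*} [Fintype ι] (x y : ι → ℤ) : ℤ := ∑ i, x i * y i

/-- The root lattice `Aₙ ⊆ ℤ^{n+1}`. -/
def AnS (n : ℕ) : AddSubgroup (Fin (n + 1) → ℤ) where
  carrier := {x | ∑ i, x i = 0}
  add_mem' := by
    intro a b ha hb
    simp only [Set.mem_setOf_eq, Pi.add_apply, Finset.sum_add_distrib] at *
    rw [ha, hb]; ring
  zero_mem' := by simp
  neg_mem' := by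
    intro a ha
    simp only [Set.mem_setOf_eq, Pi.neg_apply, Finset.sum_neg_distrib] at *
    rw [ha]; ring

/-- The root lattice `Dₙ ⊆ ℤⁿ`. -/
def DnS (n : ℕ) : AddSubgroup (Fin n → ℤ) where
  carrier := {x | (2 : ℤ) ∣ ∑ i, x i}
  add_mem' := by
    intro a b ha hb
    simp only [Set.mem_setOf_eq, Pi.add_apply, Finset.sum_add_distrib] at *
    exact dvd_add ha hb
  zero_mem' := by simp
  neg_mem' := by
    intro a ha
    simp only [Set.mem_setOf_eq, Pi.neg_apply, Finset.sum_neg_distrib] at *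
    exact ha.neg_right

/-- The inner product on a root lattice, restricted from the ambient dot product. -/
def rootF {n : ℕ} (S : AddSubgroup (Fin n → ℤ)) (x y : ↥S) : ℤ := dotF x.val y.val


/-- The simple root `α₁ = (1,−1,0,0)` of `D₄`. -/
def d4a1 : ↥(DnS 4) := ⟨![1, -1, 0, 0], by show (2:ℤ) ∣ ∑ i, ![1,-1,0,0] i; decide⟩

/-- The simple root `α₂ = (0,1,−1,0)` of `D₄`. -/
def d4a2 : ↥(DnS 4) := ⟨![0, 1, -1, 0], by show (2:ℤ) ∣ ∑ i, ![0,1,-1,0] i; decide⟩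

/-- The simple root `α₃ = (0,0,1,−1)` of `D₄`. -/
def d4a3 : ↥(DnS 4) := ⟨![0, 0, 1, -1], by show (2:ℤ) ∣ ∑ i, ![0,0,1,-1] i; decide⟩

/-- The simple root `α₄ = (0,0,1,1)` of `D₄`. -/
def d4a4 : ↥(DnS 4) := ⟨![0, 0, 1, 1], by show (2:ℤ) ∣ ∑ i, ![0,0,1,1] i; decide⟩

/-- The reflection `r_a : x ↦ x − ⟨x,a⟩a` of `ℤ⁴`. -/
def reflV (a x : Fin 4 → ℤ) : Fin 4 → ℤ := x - dotF x a • a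

/-- Twice the matrix of the fixed-point-free automorphism `φ` of `D₄`:
`φ(e₁) = ½(−1,1,1,1)`, `φ(e₂) = ½(−1,−1,1,−1)`, `φ(e₃) = ½(−1,−1,−1,1)`,
`φ(e₄) = ½(−1,1,−1,−1)`. -/
def phiM : Matrix (Fin 4) (Fin 4) ℤ :=
  !![-1,-1,-1,-1; 1,-1,-1,1; 1,1,-1,-1; 1,-1,1,-1]

/-- The subgroup `P = ⟨W(D₄), w⟩` of `Aut D₄`. -/
def PGrp (w : AddAut ↥(DnS 4)) : Subgroup (AddAut ↥(DnS 4)) :=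
  WeylGrp (rootF (DnS 4)) ⊔ Subgroup.zpowers w

/-- The conjugacy class of `x` under a subgroup `H`, i.e. `Con(x)_H`. -/
def conjIn (H : Subgroup (AddAut ↥(DnS 4))) (x : AddAut ↥(DnS 4)) :
    Set (AddAut ↥(DnS 4)) :=
  {g | ∃ p ∈ H, g = p⁻¹ * x * p}

/-- `ψ` is characterized as `r_{α₁} r_{α₂}`. -/
def IsPsi (ψ : ↥(IsometryGrp (rootF (DnS 4)))) : Prop :=
  ∀ x : ↥(DnS 4),
    ((ψ : AddAut ↥(DnS 4)) x).val = reflV d4a1.val (reflV d4a2.val x.val)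

/-- `ω` is characterized as the isometry with `ω(α₁) = α₃`, `ω(α₃) = α₄`,
`ω(α₄) = α₁`, `ω(α₂) = α₂`. -/
def IsOmega (ω : ↥(IsometryGrp (rootF (DnS 4)))) : Prop :=
  (ω : AddAut ↥(DnS 4)) d4a1 = d4a3 ∧ (ω : AddAut ↥(DnS 4)) d4a3 = d4a4 ∧
    (ω : AddAut ↥(DnS 4)) d4a4 = d4a1 ∧ (ω : AddAut ↥(DnS 4)) d4a2 = d4a2

/-- `φ` is characterized by `2 φ(x) = phiM ⬝ x`. -/
def IsPhi (φ : ↥(IsometryGrp (rootF (DnS 4)))) : Prop :=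
  ∀ x : ↥(DnS 4),
    (2 : ℤ) • ((φ : AddAut ↥(DnS 4)) x).val = phiM.mulVec x.val

open Subgroup Matrix
open scoped Pointwise

theorem conj_sup_zpowers_eq_conj {G : Type*} [Group G] {W : Subgroup G} {g w x : G}
    (hg : g ∈ normalizer (W : Set G)) (hw : w ∈ W) (hx : Commute (g * w) x) :
    {q | ∃ p ∈ W ⊔ zpowers g, q = p⁻¹ * x * p} = {q | ∃ y ∈ W, q = y⁻¹ * x * y} := by
  have hk : zpowers (g * w) ≤ normalizer (W : Set G) :=
    zpowers_le.2 (mul_mem hg (le_normalizer hw))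
  have hle : W ⊔ zpowers g ≤ zpowers (g * w) ⊔ W := by
    refine sup_le le_sup_right (zpowers_le.2 ?_)
    simpa using mul_mem (mem_sup_left (mem_zpowers (g * w))) (mem_sup_right (inv_mem hw))
  ext q
  constructor
  · rintro ⟨p, hp, rfl⟩
    have hp' : p ∈ (zpowers (g * w) : Set G) * (W : Set G) := by
      rw [← coe_mul_of_left_le_normalizer_right _ _ hk]
      exact hle hp
    obtain ⟨a, ha, y, hy, rfl⟩ := hp'
    obtain ⟨n, rfl⟩ := mem_zpowers_iff.1 ha
    refine ⟨y, hy, ?_⟩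
    have hcomm : ((g * w) ^ n)⁻¹ * x * (g * w) ^ n = x := by
      rw [mul_assoc, ← (hx.zpow_left n).eq, inv_mul_cancel_left]
    calc ((g * w) ^ n * y)⁻¹ * x * ((g * w) ^ n * y)
        = y⁻¹ * (((g * w) ^ n)⁻¹ * x * (g * w) ^ n) * y := by group
      _ = y⁻¹ * x * y := by rw [hcomm]
  · rintro ⟨y, hy, rfl⟩
    exact ⟨y, mem_sup_left hy, rfl⟩

section Lattice

variable {L : Type*} [AddCommGroup L] {B : L → L → ℤ}

theorem conj_mem_weylGrp {f w : AddAut L} (hf : f ∈ IsometryGrp B) (hw : w ∈ WeylGrp B) :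
    f * w * f⁻¹ ∈ WeylGrp B := by
  induction hw using Subgroup.closure_induction with
  | mem w hw =>
    obtain ⟨α, hα, hwα⟩ := hw
    refine Subgroup.subset_closure ⟨f α, (hf α α).trans hα, fun x => ?_⟩
    have hx : f (f⁻¹ x) = x := f.apply_symm_apply x
    show f (w (f⁻¹ x)) = x - B x (f α) • f α
    rw [hwα, map_sub, map_zsmul, hx, ← hf (f⁻¹ x) α, hx]
  | one => simp [one_mem]
  | mul a b _ _ ha hb => simpa [mul_assoc] using mul_mem ha hb
  | inv a _ ha => simpa [mul_assoc] using inv_mem ha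

theorem isometryGrp_le_normalizer_weylGrp :
    IsometryGrp B ≤ normalizer (WeylGrp B : Set (AddAut L)) :=
  fun f hf => mem_normalizer_iff.2 fun w =>
    ⟨conj_mem_weylGrp hf, fun h => by simpa [mul_assoc] using conj_mem_weylGrp (inv_mem hf) h⟩

end Lattice

section Sublattice

variable {n : ℕ} {S : AddSubgroup (Fin n → ℤ)}

theorem rootF_eq_dotProduct (x y : S) : rootF S x y = (x : Fin n → ℤ) ⬝ᵥ y := rfl

theorem rootF_add_left (x y α : S) : rootF S (x + y) α = rootF S x α + rootF S y α :=
  add_dotProduct _ _ _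

theorem rootF_sub_smul_left (x α : S) (c : ℤ) :
    rootF S (x - c • α) α = rootF S x α - c * rootF S α α := by
  simp only [rootF_eq_dotProduct, AddSubgroup.coe_sub, AddSubgroup.coe_zsmul, sub_dotProduct,
    smul_dotProduct, smul_eq_mul]

def rootReflection (α : S) (hα : rootF S α α = 2) : AddAut S where
  toFun x := x - rootF S x α • α
  invFun x := x - rootF S x α • α
  left_inv x := by
    simp only [rootF_sub_smul_left, hα]
    module
  right_inv x := by
    simp only [rootF_sub_smul_left, hα]
    module
  map_add' x y := by
    simp only [rootF_add_left]
    module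

theorem rootReflection_mem_weylGrp (α : S) (hα : rootF S α α = 2) :
    rootReflection α hα ∈ WeylGrp (rootF S) :=
  Subgroup.subset_closure ⟨α, hα, fun _ => rfl⟩

/-- `f` acts on `S` as the rational matrix `m⁻¹ A`; the scaling keeps the half-integral
matrices of `ω` and `φ` over `ℤ`. -/
def ActsByMatrix (m : ℤ) (A : Matrix (Fin n) (Fin n) ℤ) (f : AddAut S) : Prop :=
  ∀ x : S, m • (f x : Fin n → ℤ) = A *ᵥ x

theorem actsByMatrix_rootReflection (α : S) (hα : rootF S α α = 2) :
    ActsByMatrix 1 (1 - vecMulVec α α) (rootReflection α hα) := by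
  intro x
  change 1 • ((x : Fin n → ℤ) - ((x : Fin n → ℤ) ⬝ᵥ α) • (α : Fin n → ℤ)) = _
  rw [one_smul, sub_mulVec, one_mulVec, vecMulVec_mulVec, op_smul_eq_smul, dotProduct_comm]

theorem ActsByMatrix.mul {m m' : ℤ} {A A' : Matrix (Fin n) (Fin n) ℤ} {f f' : AddAut S}
    (hf : ActsByMatrix m A f) (hf' : ActsByMatrix m' A' f') :
    ActsByMatrix (m * m') (A * A') (f * f') := fun x => by
  change (m * m') • (f (f' x) : Fin n → ℤ) = _
  rw [mul_comm, mul_smul, hf, ← mulVec_smul, hf', mulVec_mulVec]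

theorem ActsByMatrix.eq {m : ℤ} (hm : m ≠ 0) {A : Matrix (Fin n) (Fin n) ℤ} {f f' : AddAut S}
    (hf : ActsByMatrix m A f) (hf' : ActsByMatrix m A f') : f = f' :=
  AddEquiv.ext fun x => Subtype.ext <| smul_right_injective _ hm <| (hf x).trans (hf' x).symm

theorem ActsByMatrix.commute {m m' : ℤ} (hm : m ≠ 0) (hm' : m' ≠ 0)
    {A A' : Matrix (Fin n) (Fin n) ℤ} {f f' : AddAut S}
    (hf : ActsByMatrix m A f) (hf' : ActsByMatrix m' A' f') (hA : Commute A A') :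
    Commute f f' :=
  (hf.mul hf').eq (mul_ne_zero hm hm') (by rw [mul_comm m, hA.eq]; exact hf'.mul hf)

end Sublattice

section D4

theorem dnS_four_eq_sum_simpleRoots (x : DnS 4) (t : ℤ)
    (ht : x.val 0 + x.val 1 + x.val 2 + x.val 3 = 2 * t) :
    x = x.val 0 • d4a1 + (x.val 0 + x.val 1) • d4a2 + (t - x.val 3) • d4a3 + t • d4a4 := by
  ext i
  fin_cases i <;> simp [d4a1, d4a2, d4a3, d4a4]
  linear_combination ht

theorem dnS_four_addMonoidHom_ext {M : Type*} [AddCommGroup M] {f g : DnS 4 →+ M}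
    (h₁ : f d4a1 = g d4a1) (h₂ : f d4a2 = g d4a2) (h₃ : f d4a3 = g d4a3)
    (h₄ : f d4a4 = g d4a4) : f = g := by
  ext x
  obtain ⟨t, ht⟩ := x.2
  rw [Fin.sum_univ_four] at ht
  rw [dnS_four_eq_sum_simpleRoots x t ht]
  simp only [map_add, map_zsmul, h₁, h₂, h₃, h₄]

def omegaMatrix : Matrix (Fin 4) (Fin 4) ℤ :=
  !![1, 1, 1, 1; 1, 1, -1, -1; 1, -1, 1, -1; -1, 1, 1, -1]

theorem actsByMatrix_omega {ω : IsometryGrp (rootF (DnS 4))} (hω : IsOmega ω) :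
    ActsByMatrix 2 omegaMatrix (ω : AddAut (DnS 4)) := by
  obtain ⟨h₁, h₃, h₄, h₂⟩ := hω
  have key : 2 • ((DnS 4).subtype.comp (ω : AddAut (DnS 4)).toAddMonoidHom)
      = omegaMatrix.mulVecLin.toAddMonoidHom.comp (DnS 4).subtype := by
    apply dnS_four_addMonoidHom_ext <;>
      simp only [AddMonoidHom.smul_apply, AddMonoidHom.comp_apply, AddEquiv.coe_toAddMonoidHom,
        h₁, h₂, h₃, h₄] <;> decide
  exact fun x => DFunLike.congr_fun key x

def d4e12 : DnS 4 := ⟨![1, 1, 0, 0], by show (2 : ℤ) ∣ ∑ i, ![(1 : ℤ), 1, 0, 0] i; decide⟩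

def d4e13 : DnS 4 := ⟨![1, 0, 1, 0], by show (2 : ℤ) ∣ ∑ i, ![(1 : ℤ), 0, 1, 0] i; decide⟩

theorem exists_weylGrp_commute_omega_mul_phi {ω φ : IsometryGrp (rootF (DnS 4))}
    (hω : IsOmega ω) (hφ : IsPhi φ) :
    ∃ w ∈ WeylGrp (rootF (DnS 4)), Commute ((ω : AddAut (DnS 4)) * w) φ := by
  have h₁₂ : rootF (DnS 4) d4e12 d4e12 = 2 := by decide
  have h₁₃ : rootF (DnS 4) d4e13 d4e13 = 2 := by decide
  refine ⟨rootReflection _ h₁₃ * rootReflection _ h₁₂,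
    mul_mem (rootReflection_mem_weylGrp _ _) (rootReflection_mem_weylGrp _ _), ?_⟩
  refine ActsByMatrix.commute (by norm_num) two_ne_zero ((actsByMatrix_omega hω).mul
    ((actsByMatrix_rootReflection _ h₁₃).mul (actsByMatrix_rootReflection _ h₁₂))) hφ ?_
  unfold Commute SemiconjBy
  decide

end D4

theorem stmt11_general (ω φ : ↥(IsometryGrp (rootF (DnS 4))))
    (hω : IsOmega ω) (hφ : IsPhi φ)
    (ε : AddAut ↥(DnS 4)) (hε : ε = (ω : AddAut ↥(DnS 4)) ∨ ε = (φ : AddAut ↥(DnS 4)))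
    (c : ℤ) :
    conjIn (PGrp (ω : AddAut ↥(DnS 4))) (ε ^ c)
      = {g | ∃ y ∈ WeylGrp (rootF (DnS 4)), g = y⁻¹ * ε ^ c * y} := by
  obtain ⟨w, hw, hcomm⟩ :
      ∃ w ∈ WeylGrp (rootF (DnS 4)), Commute ((ω : AddAut (DnS 4)) * w) ε := by
    rcases hε with rfl | rfl
    · exact ⟨1, one_mem _, by rw [mul_one]⟩
    · exact exists_weylGrp_commute_omega_mul_phi hω hφ
  exact conj_sup_zpowers_eq_conj (isometryGrp_le_normalizer_weylGrp ω.2) hw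
    (hcomm.zpow_right c)

/-- Lemma 3.2(2): for `ε ∈ {ω, φ}` and `c ∈ {1, −1}`,
`Con(ε^c)_P = { y⁻¹ ε^c y : y ∈ W(D₄) }`, where `P = ⟨W(D₄), ω⟩`. -/
theorem stmt11 (ω φ : ↥(IsometryGrp (rootF (DnS 4))))
    (hω : IsOmega ω) (hφ : IsPhi φ)
    (ε : AddAut ↥(DnS 4)) (hε : ε = (ω : AddAut ↥(DnS 4)) ∨ ε = (φ : AddAut ↥(DnS 4)))
    (c : ℤ) (hc : c = 1 ∨ c = -1) :
    conjIn (PGrp (ω : AddAut ↥(DnS 4))) (ε ^ c)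
      = {g | ∃ y ∈ WeylGrp (rootF (DnS 4)), g = y⁻¹ * ε ^ c * y} :=
  stmt11_general ω φ hω hφ ε hε c
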